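/- For s > 0 and t ≥ 0, the function V(s,t) = v₀(s) / √(1 + (e^{2t} − 1)e^{-2s}) satisfies dV/dt = φ'(q)φ(q) V with V(s,0) = v₀(s), where q(s,t) = (1/2)ln(1 + (e^{2s}−1)e^{-2t}) and φ(x) = e^{-|x|}; for s < 0, V(s,t) = v₀(s)/√(1 + (e^{-2t} − 1)e^{2s}) satisfies the same ODE with q(s,t) = −(1/2)ln(1+(e^{-2s}−1)e^{2t}). -/

import Mathlib

open MeasureTheory Real Set Filter

/-- `φ(x) = e^{-|x|}`. -/
noncomputable def phi (x : ℝ) : ℝ := Real.exp (-|x|)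

/-- `φ'(x) = -sgn(x) e^{-|x|}` (a.e. derivative). -/
noncomputable def phi' (x : ℝ) : ℝ := -Real.sign x * Real.exp (-|x|)

/-- The characteristic curves of the linearized Novikov flow. -/
noncomputable def q (s t : ℝ) : ℝ :=
  if 0 < s then (1 / 2) * Real.log (1 + (Real.exp (2 * s) - 1) * Real.exp (-2 * t))
  else if s < 0 then -((1 / 2) * Real.log (1 + (Real.exp (-2 * s) - 1) * Real.exp (2 * t)))
  else 0

/-- The solution along characteristics for `s > 0`. -/
noncomputable def Vp (v0 : ℝ → ℝ) (s t : ℝ) : ℝ :=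
  v0 s / Real.sqrt (1 + (Real.exp (2 * t) - 1) * Real.exp (-2 * s))

/-- The solution along characteristics for `s < 0`. -/
noncomputable def Vm (v0 : ℝ → ℝ) (s t : ℝ) : ℝ :=
  v0 s / Real.sqrt (1 + (Real.exp (-2 * t) - 1) * Real.exp (2 * s))

/-!
For `s > 0` put `X = e^{2q} = 1 + (e^{2s} - 1)e^{-2t}` and `D = 1 + (e^{2t} - 1)e^{-2s}`, so that
`V = v₀(s)/√D`. The identity `D = e^{2t-2s} X` gives `D'/(2D) = e^{2t-2s}/D = 1/X = e^{-2q}`, hence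
`V' = -(D'/2D) V = -e^{-2q} V = φ'(q)φ(q) V` since `q > 0`. The case `s < 0` is the mirror image
under `(s, t) ↦ (-s, -t)`: `Vm v₀ s t = Vp (v₀ ∘ neg) (-s) (-t)` and `q s t = -q (-s) (-t)`,
while `φ'φ` is odd; this needs the case `s > 0` for all `t`, not only `t ≥ 0`.
-/

theorem hasDerivAt_const_div_sqrt {f : ℝ → ℝ} {f' x : ℝ} (c : ℝ) (hf : HasDerivAt f f' x)
    (hx : 0 < f x) :
    HasDerivAt (fun y => c / √(f y)) (-(f' / (2 * f x)) * (c / √(f x))) x := by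
  have hsqrt : 0 < √(f x) := sqrt_pos.mpr hx
  refine ((hasDerivAt_const x c).div (hf.sqrt hx.ne') hsqrt.ne').congr_deriv ?_
  field_simp
  rw [sq_sqrt hx.le]
  ring

theorem phi'_mul_phi_of_pos {x : ℝ} (hx : 0 < x) : phi' x * phi x = -(exp (2 * x))⁻¹ := by
  rw [phi', phi, sign_of_pos hx, abs_of_pos hx, ← exp_neg, neg_one_mul, neg_mul, ← exp_add]
  ring_nf

theorem phi'_neg (x : ℝ) : phi' (-x) = -phi' x := by
  simp [phi', sign_neg]

theorem phi_neg (x : ℝ) : phi (-x) = phi x := by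
  simp [phi]

theorem one_lt_one_add_exp_sub_one_mul_exp {s : ℝ} (hs : 0 < s) (t : ℝ) :
    1 < 1 + (exp (2 * s) - 1) * exp (-2 * t) := by
  have : 0 < exp (2 * s) - 1 := sub_pos.mpr (one_lt_exp_iff.mpr (by linarith))
  nlinarith [exp_pos (-2 * t)]

theorem q_of_pos {s : ℝ} (hs : 0 < s) (t : ℝ) :
    q s t = (1 / 2) * log (1 + (exp (2 * s) - 1) * exp (-2 * t)) := by
  simp [q, hs]

theorem q_pos {s : ℝ} (hs : 0 < s) (t : ℝ) : 0 < q s t := by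
  rw [q_of_pos hs]
  have := log_pos (one_lt_one_add_exp_sub_one_mul_exp hs t)
  positivity

theorem exp_two_mul_q_of_pos {s : ℝ} (hs : 0 < s) (t : ℝ) :
    exp (2 * q s t) = 1 + (exp (2 * s) - 1) * exp (-2 * t) := by
  rw [q_of_pos hs, ← mul_assoc, show (2 : ℝ) * (1 / 2) = 1 by norm_num, one_mul,
    exp_log (by linarith [one_lt_one_add_exp_sub_one_mul_exp hs t])]

theorem q_of_neg {s : ℝ} (hs : s < 0) (t : ℝ) : q s t = -q (-s) (-t) := by
  rw [q_of_pos (neg_pos.mpr hs)]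
  simp [q, hs, hs.not_gt]

theorem one_add_exp_sub_one_mul_exp_eq (s t : ℝ) :
    1 + (exp (2 * t) - 1) * exp (-2 * s) =
      exp (2 * t) * exp (-2 * s) * (1 + (exp (2 * s) - 1) * exp (-2 * t)) := by
  have hs : exp (2 * s) * exp (-2 * s) = 1 := by rw [← exp_add]; simp
  have ht : exp (2 * t) * exp (-2 * t) = 1 := by rw [← exp_add]; simp
  linear_combination (exp (-2 * s) - exp (2 * s) * exp (-2 * s)) * ht - hs

theorem Vp_zero (v0 : ℝ → ℝ) (s : ℝ) : Vp v0 s 0 = v0 s := by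
  simp [Vp]

theorem Vm_zero (v0 : ℝ → ℝ) (s : ℝ) : Vm v0 s 0 = v0 s := by
  simp [Vm]

theorem Vm_eq_Vp (v0 : ℝ → ℝ) (s t : ℝ) : Vm v0 s t = Vp (fun x => v0 (-x)) (-s) (-t) := by
  simp [Vm, Vp]

theorem hasDerivAt_Vp (v0 : ℝ → ℝ) {s : ℝ} (hs : 0 < s) (t : ℝ) :
    HasDerivAt (Vp v0 s) (phi' (q s t) * phi (q s t) * Vp v0 s t) t := by
  have hDt : 0 < 1 + (exp (2 * t) - 1) * exp (-2 * s) := by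
    rw [one_add_exp_sub_one_mul_exp_eq]
    have := one_lt_one_add_exp_sub_one_mul_exp hs t
    positivity
  have hD' : HasDerivAt (fun τ => 1 + (exp (2 * τ) - 1) * exp (-2 * s))
      (exp (2 * t) * 2 * exp (-2 * s)) t := by
    refine (((((hasDerivAt_id' t).const_mul 2).exp.sub_const 1).mul_const
      (exp (-2 * s))).const_add 1).congr_deriv ?_
    ring
  have hD'_div : exp (2 * t) * 2 * exp (-2 * s) / (2 * (1 + (exp (2 * t) - 1) * exp (-2 * s))) =
      (exp (2 * q s t))⁻¹ := by
    rw [exp_two_mul_q_of_pos hs, one_add_exp_sub_one_mul_exp_eq]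
    field_simp
  refine (hasDerivAt_const_div_sqrt (v0 s) hD' hDt).congr_deriv ?_
  rw [hD'_div, phi'_mul_phi_of_pos (q_pos hs t), Vp]

theorem hasDerivAt_Vm (v0 : ℝ → ℝ) {s : ℝ} (hs : s < 0) (t : ℝ) :
    HasDerivAt (Vm v0 s) (phi' (q s t) * phi (q s t) * Vm v0 s t) t := by
  have hVp := (hasDerivAt_Vp (fun x => v0 (-x)) (neg_pos.mpr hs) (-t)).comp t (hasDerivAt_neg' t)
  rw [funext (Vm_eq_Vp v0 s), q_of_neg hs, phi'_neg, phi_neg]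
  exact hVp.congr_deriv (by ring)

/-- `V(s,t)` satisfies `dV/dt = φ'(q)φ(q)V` with `V(s,0) = v₀(s)`, for `s > 0`
and for `s < 0`. -/
theorem V_solves_ode_along_characteristics (v0 : ℝ → ℝ) :
    (∀ s : ℝ, 0 < s → Vp v0 s 0 = v0 s ∧ ∀ t : ℝ, 0 ≤ t →
      HasDerivAt (fun τ => Vp v0 s τ) (phi' (q s t) * phi (q s t) * Vp v0 s t) t)
    ∧
    (∀ s : ℝ, s < 0 → Vm v0 s 0 = v0 s ∧ ∀ t : ℝ, 0 ≤ t →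
      HasDerivAt (fun τ => Vm v0 s τ) (phi' (q s t) * phi (q s t) * Vm v0 s t) t) :=
  ⟨fun _ hs => ⟨Vp_zero v0 _, fun t _ => hasDerivAt_Vp v0 hs t⟩,
    fun _ hs => ⟨Vm_zero v0 _, fun t _ => hasDerivAt_Vm v0 hs t⟩⟩
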